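/- Let ω ∈ ℝ and K, T > 0 satisfy ω > 2KT, let μ0 ∈ (0,1/2) be such that f̄ attains its minimum over [0,1] exactly at μ0 and μ1 := 1−μ0, and set f(s) := f̄(s) − f̄(μ0). Then for every δ > 0 there exists h > 0, depending only on δ, ω, K, T, with the following property: for every d, l, ε > 0, every symmetric real 2×2 matrix e0, every c ∈ C¹((−d,d)×(−l,l), [0,1]), every u ∈ C¹((−d,d)×(−l,l), ℝ²), and every C¹ curve γ : [0,1] → (−d,d)×(−l,l) whose length ∫₀¹ ‖γ′(t)‖ dt is at least ε, if ∫₀¹ g_ε(γ(t))·‖γ′(t)‖ dt ≤ h, where g_ε(z) := (1/ε)·f(c(z)) + ε·‖∇c(z)‖² + (1/ε)·‖e(u)(z) − c(z)·e0‖², then either |c(γ(t)) − μ0| ≤ δ for all t ∈ [0,1], or |c(γ(t)) − μ1| ≤ δ for all t ∈ [0,1]. -/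

import Mathlib

/-!
Modica–Mortola argument. Let `Φ(s) = ∫₀ˢ √f`. By AM–GM, `f(c)/ε + ε|∇c|² ≥ 2√f(c)|∇c|`, so
the energy along `γ` dominates twice the total variation of `Φ ∘ c ∘ γ`: the values of
`Φ ∘ c ∘ γ` differ by at most `h/2`. Since `γ` has length at least `ε`, the term `f(c)/ε` alone
forces `f(c(γ t₀)) ≤ h` at some `t₀`. Two compactness arguments on `[0, 1]` finish: `f` is
bounded below away from its wells, and `Φ`, strictly increasing there, has a uniformly
continuous inverse.
-/

open Matrix

noncomputable def fbar (ω K T : ℝ) (s : ℝ) : ℝ :=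
  ω * s * (1 - s) + K * T * (s * Real.log s + (1 - s) * Real.log (1 - s))

noncomputable def gradSq (c : ℝ × ℝ → ℝ) (z : ℝ × ℝ) : ℝ :=
  (fderiv ℝ c z (1, 0)) ^ 2 + (fderiv ℝ c z (0, 1)) ^ 2

noncomputable def gradMat (u : ℝ × ℝ → ℝ × ℝ) (z : ℝ × ℝ) : Matrix (Fin 2) (Fin 2) ℝ :=
  !![(fderiv ℝ u z (1, 0)).1, (fderiv ℝ u z (0, 1)).1;
     (fderiv ℝ u z (1, 0)).2, (fderiv ℝ u z (0, 1)).2]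

noncomputable def symGrad (u : ℝ × ℝ → ℝ × ℝ) (z : ℝ × ℝ) : Matrix (Fin 2) (Fin 2) ℝ :=
  (1 / 2 : ℝ) • (gradMat u z + (gradMat u z)ᵀ)

noncomputable def frobSq (M : Matrix (Fin 2) (Fin 2) ℝ) : ℝ :=
  ∑ i, ∑ j, (M i j) ^ 2

noncomputable def genergy (f : ℝ → ℝ) (e0 : Matrix (Fin 2) (Fin 2) ℝ) (ε : ℝ)
    (u : ℝ × ℝ → ℝ × ℝ) (c : ℝ × ℝ → ℝ) (z : ℝ × ℝ) : ℝ :=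
  (1 / ε) * f (c z) + ε * gradSq c z + (1 / ε) * frobSq (symGrad u z - c z • e0)

open Set MeasureTheory intervalIntegral

lemma continuous_fbar (ω K T : ℝ) : Continuous (fbar ω K T) := by
  unfold fbar
  fun_prop

section Compactness

variable {X Y : Type*} [PseudoMetricSpace X] [MetricSpace Y] {s : Set X}

lemma IsCompact.exists_pos_exists_dist_lt_of_lt {f : X → ℝ} {Z : Set X}
    (hs : IsCompact s) (hf : ContinuousOn f s) (hpos : ∀ x ∈ s \ Z, 0 < f x) {η : ℝ}
    (hη : 0 < η) : ∃ m > 0, ∀ x ∈ s, f x < m → ∃ z ∈ Z, dist x z < η := by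
  have hclosed : IsClosed {x | ∀ z ∈ Z, η ≤ dist x z} := by
    simp only [ofPred_forall]
    exact isClosed_biInter fun z _ =>
      isClosed_le continuous_const (continuous_id.dist continuous_const)
  obtain ⟨m, hm, hmf⟩ := (hs.inter_right hclosed).exists_forall_le' (hf.mono inter_subset_left)
    (a := 0) fun x ⟨hxs, hxZ⟩ => hpos x ⟨hxs, fun hx => by simpa [hη.not_ge] using hxZ x hx⟩
  refine ⟨m, hm, fun x hx hfx => ?_⟩
  by_contra! hfar
  exact (hmf x ⟨hx, hfar⟩).not_gt hfx

lemma IsCompact.exists_pos_dist_lt_of_dist_apply_lt {g : X → Y} (hs : IsCompact s)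
    (hg : ContinuousOn g s) (hinj : InjOn g s) {η : ℝ} (hη : 0 < η) :
    ∃ κ > 0, ∀ x ∈ s, ∀ y ∈ s, dist (g x) (g y) < κ → dist x y < η := by
  have hclosed : IsClosed {p : X × X | η ≤ dist p.1 p.2} :=
    isClosed_le continuous_const (continuous_fst.dist continuous_snd)
  have hcont : ContinuousOn (fun p : X × X => dist (g p.1) (g p.2)) (s ×ˢ s) :=
    continuous_dist.comp_continuousOn <| (hg.comp continuousOn_fst fun _ hp => hp.1).prodMk
      (hg.comp continuousOn_snd fun _ hp => hp.2)
  obtain ⟨κ, hκ, hκg⟩ := ((hs.prod hs).inter_right hclosed).exists_forall_le' (a := 0)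
    (hcont.mono inter_subset_left)
    fun p ⟨⟨hx, hy⟩, hp⟩ => dist_pos.2 fun h => by
      simp [hinj hx hy h, hη.not_ge] at hp
  refine ⟨κ, hκ, fun x hx y hy hxy => ?_⟩
  by_contra! hfar
  exact (hκg (x, y) ⟨⟨hx, hy⟩, hfar⟩).not_gt hxy

end Compactness

noncomputable def sqrtPrimitive (f : ℝ → ℝ) (x : ℝ) : ℝ :=
  ∫ r in (0 : ℝ)..x, √(f r)

section SqrtPrimitive

variable {f : ℝ → ℝ}

lemma hasDerivAt_sqrtPrimitive (hf : Continuous f) (x : ℝ) :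
    HasDerivAt (sqrtPrimitive f) √(f x) x :=
  ((Real.continuous_sqrt.comp hf).integral_hasStrictDerivAt 0 x).hasDerivAt

lemma continuous_sqrtPrimitive (hf : Continuous f) : Continuous (sqrtPrimitive f) :=
  continuous_iff_continuousAt.2 fun x => (hasDerivAt_sqrtPrimitive hf x).continuousAt

lemma sqrtPrimitive_strictMonoOn {Z : Set ℝ} {p q : ℝ} (hf : Continuous f) (hZ : Z.Finite)
    (hpos : ∀ s ∈ Icc p q \ Z, 0 < f s) : StrictMonoOn (sqrtPrimitive f) (Icc p q) := by
  intro x hx y hy hxy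
  have hF : Continuous fun r => √(f r) := Real.continuous_sqrt.comp hf
  obtain ⟨s, hs, hsZ⟩ := (Icc_infinite hxy).exists_notMem_finite hZ
  have hpos_int : 0 < ∫ r in x..y, √(f r) :=
    integral_pos hxy hF.continuousOn (fun _ _ => Real.sqrt_nonneg _)
      ⟨s, hs, Real.sqrt_pos.2 (hpos s ⟨⟨hx.1.trans hs.1, hs.2.trans hy.2⟩, hsZ⟩)⟩
  have hsub : sqrtPrimitive f y - sqrtPrimitive f x = ∫ r in x..y, √(f r) :=
    integral_interval_sub_left (hF.intervalIntegrable _ _) (hF.intervalIntegrable _ _)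
  linarith

end SqrtPrimitive

/-- The Euclidean norm; the library norm on `ℝ × ℝ` is the sup norm. -/
noncomputable def euclNorm (p : ℝ × ℝ) : ℝ :=
  √(p.1 ^ 2 + p.2 ^ 2)

section EnergyDensity

variable {f : ℝ → ℝ} {e0 : Matrix (Fin 2) (Fin 2) ℝ} {ε : ℝ} {u : ℝ × ℝ → ℝ × ℝ}
  {c : ℝ × ℝ → ℝ} {z : ℝ × ℝ}

lemma gradSq_nonneg (c : ℝ × ℝ → ℝ) (z : ℝ × ℝ) : 0 ≤ gradSq c z := by
  unfold gradSq; positivity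

lemma frobSq_nonneg (M : Matrix (Fin 2) (Fin 2) ℝ) : 0 ≤ frobSq M := by
  unfold frobSq; positivity

lemma abs_fderiv_apply_le_sqrt_gradSq_mul (c : ℝ × ℝ → ℝ) (z w : ℝ × ℝ) :
    |fderiv ℝ c z w| ≤ √(gradSq c z) * euclNorm w := by
  have hw : fderiv ℝ c z w = w.1 * fderiv ℝ c z (1, 0) + w.2 * fderiv ℝ c z (0, 1) := by
    rw [← smul_eq_mul, ← smul_eq_mul, ← map_smul, ← map_smul, ← map_add]
    congr 1; ext <;> simp
  rw [hw, gradSq, euclNorm, ← Real.sqrt_mul (by positivity), ← Real.sqrt_sq_eq_abs]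
  apply Real.sqrt_le_sqrt
  nlinarith [sq_nonneg (fderiv ℝ c z (1, 0) * w.2 - fderiv ℝ c z (0, 1) * w.1)]

lemma add_le_genergy (hε : 0 < ε) :
    (1 / ε) * f (c z) + ε * gradSq c z ≤ genergy f e0 ε u c z := by
  have := mul_nonneg (one_div_nonneg.2 hε.le) (frobSq_nonneg (symGrad u z - c z • e0))
  unfold genergy
  linarith

lemma one_div_mul_le_genergy (hε : 0 < ε) : (1 / ε) * f (c z) ≤ genergy f e0 ε u c z := by
  have := mul_nonneg hε.le (gradSq_nonneg c z)
  linarith [add_le_genergy (f := f) (e0 := e0) (u := u) (c := c) (z := z) hε]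

lemma genergy_nonneg (hε : 0 < ε) (hf : 0 ≤ f (c z)) : 0 ≤ genergy f e0 ε u c z :=
  (by positivity : 0 ≤ (1 / ε) * f (c z)).trans (one_div_mul_le_genergy hε)

lemma two_mul_sqrt_mul_abs_fderiv_le_genergy_mul (hε : 0 < ε) (hf : 0 ≤ f (c z))
    (w : ℝ × ℝ) :
    2 * (√(f (c z)) * |fderiv ℝ c z w|) ≤ genergy f e0 ε u c z * euclNorm w := by
  set a := √(f (c z))
  set b := √(gradSq c z)
  have hab : 2 * (a * b) ≤ (1 / ε) * f (c z) + ε * gradSq c z := by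
    rw [← Real.sq_sqrt hf, ← Real.sq_sqrt (gradSq_nonneg c z)]
    have : (1 / ε) * a ^ 2 + ε * b ^ 2 - 2 * (a * b) = (a - ε * b) ^ 2 / ε := by
      field_simp; ring
    nlinarith [div_nonneg (sq_nonneg (a - ε * b)) hε.le]
  calc 2 * (a * |fderiv ℝ c z w|) ≤ 2 * (a * b) * euclNorm w := by
        nlinarith [abs_fderiv_apply_le_sqrt_gradSq_mul c z w, Real.sqrt_nonneg (f (c z))]
    _ ≤ genergy f e0 ε u c z * euclNorm w :=
        mul_le_mul_of_nonneg_right (hab.trans (add_le_genergy hε)) (Real.sqrt_nonneg _)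

lemma continuous_frobSq : Continuous frobSq := by
  unfold frobSq; fun_prop

lemma continuousOn_genergy {U : Set (ℝ × ℝ)} (hf : Continuous f) (hU : IsOpen U)
    (hc : ContDiffOn ℝ 1 c U) (hu : ContDiffOn ℝ 1 u U) :
    ContinuousOn (genergy f e0 ε u c) U := by
  have hdc := hc.continuousOn_fderiv_of_isOpen hU le_rfl
  have hdu := hu.continuousOn_fderiv_of_isOpen hU le_rfl
  have hgradMat : ContinuousOn (gradMat u) U := by
    refine continuousOn_pi.2 fun i => continuousOn_pi.2 fun j => ?_
    fin_cases i <;> fin_cases j <;> simp [gradMat] <;> fun_prop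
  have hcc := hc.continuousOn
  refine ((continuousOn_const.mul (hf.comp_continuousOn hcc)).add
    (continuousOn_const.mul ?_)).add
    (continuousOn_const.mul (continuous_frobSq.comp_continuousOn ?_))
  · unfold gradSq; fun_prop
  · unfold symGrad; fun_prop

end EnergyDensity

section Curves

variable {f : ℝ → ℝ} {e0 : Matrix (Fin 2) (Fin 2) ℝ} {ε : ℝ} {u : ℝ × ℝ → ℝ × ℝ}
  {c : ℝ × ℝ → ℝ} {γ : ℝ → ℝ × ℝ} {U : Set (ℝ × ℝ)} {a b : ℝ}

lemma intervalIntegrable_comp_mul_euclNorm_deriv {G : ℝ × ℝ → ℝ} (hab : a < b)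
    (hG : ContinuousOn G U) (hγ : ContDiffOn ℝ 1 γ (Icc a b)) (hγU : MapsTo γ (Icc a b) U) :
    IntervalIntegrable (fun t => G (γ t) * euclNorm (deriv γ t)) volume a b := by
  have hD : ContinuousOn (derivWithin γ (Icc a b)) (Icc a b) :=
    hγ.continuousOn_derivWithin (uniqueDiffOn_Icc hab) le_rfl
  have hcont : ContinuousOn (fun t => G (γ t) * euclNorm (derivWithin γ (Icc a b) t))
      (Icc a b) := by
    refine (hG.comp hγ.continuousOn hγU).mul ?_
    unfold euclNorm; fun_prop
  rw [intervalIntegrable_iff_integrableOn_Icc_of_le hab.le, integrableOn_Icc_iff_integrableOn_Ioo]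
  refine (hcont.integrableOn_Icc.mono_set Ioo_subset_Icc_self).congr_fun (fun t ht => ?_)
    measurableSet_Ioo
  simp only [derivWithin_of_mem_nhds (Icc_mem_nhds ht.1 ht.2)]

lemma two_mul_abs_sqrtPrimitive_sub_le_integral (hf : Continuous f) (hε : 0 < ε)
    (hU : IsOpen U) (hc : ContDiffOn ℝ 1 c U) (hfc : ∀ z ∈ U, 0 ≤ f (c z))
    (hγ : ContDiffOn ℝ 1 γ (Icc a b)) (hγU : MapsTo γ (Icc a b) U)
    (hint : IntervalIntegrable (fun t => genergy f e0 ε u c (γ t) * euclNorm (deriv γ t))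
      volume a b)
    {t t' : ℝ} (ht : t ∈ Icc a b) (ht' : t' ∈ Icc a b) :
    2 * |sqrtPrimitive f (c (γ t')) - sqrtPrimitive f (c (γ t))| ≤
      ∫ s in a..b, genergy f e0 ε u c (γ s) * euclNorm (deriv γ s) := by
  wlog htt : t ≤ t' generalizing t t'
  · rw [abs_sub_comm]; exact this ht' ht (le_of_not_ge htt)
  set E := fun s => genergy f e0 ε u c (γ s) * euclNorm (deriv γ s)
  set Ψ := fun s => 2 * sqrtPrimitive f (c (γ s))
  have hsub : Icc t t' ⊆ Icc a b := Icc_subset_Icc ht.1 ht'.2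
  have hΨ : ContinuousOn Ψ (Icc t t') := continuousOn_const.mul <|
    (continuous_sqrtPrimitive hf).comp_continuousOn
      ((hc.continuousOn.comp hγ.continuousOn hγU).mono hsub)
  have hΨ' : ∀ s ∈ Ioo t t',
      HasDerivAt Ψ (2 * (√(f (c (γ s))) * fderiv ℝ c (γ s) (deriv γ s))) s := by
    intro s hs
    have hs' : s ∈ Ioo a b := ⟨ht.1.trans_lt hs.1, hs.2.trans_le ht'.2⟩
    have hγs : HasDerivAt γ (deriv γ s) s :=
      ((hγ.differentiableOn one_ne_zero s (Ioo_subset_Icc_self hs')).differentiableAt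
        (Icc_mem_nhds hs'.1 hs'.2)).hasDerivAt
    have hγs_mem := hγU (Ioo_subset_Icc_self hs')
    have hcs : HasFDerivAt c (fderiv ℝ c (γ s)) (γ s) :=
      ((hc.differentiableOn one_ne_zero _ hγs_mem).differentiableAt (hU.mem_nhds hγs_mem)).hasFDerivAt
    exact ((hasDerivAt_sqrtPrimitive hf _).comp s (hcs.comp_hasDerivAt s hγs)).const_mul 2
  have hΨ'_le : ∀ s ∈ Ioo t t', |2 * (√(f (c (γ s))) * fderiv ℝ c (γ s) (deriv γ s))| ≤ E s := by
    intro s hs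
    rw [abs_mul, abs_mul, abs_two, abs_of_nonneg (Real.sqrt_nonneg _)]
    exact two_mul_sqrt_mul_abs_fderiv_le_genergy_mul hε
      (hfc _ (hγU (hsub (Ioo_subset_Icc_self hs)))) _
  have hEint : IntegrableOn E (Icc t t') := by
    refine (intervalIntegrable_iff_integrableOn_Icc_of_le htt).1 (hint.mono_set ?_)
    rw [uIcc_of_le htt, uIcc_of_le (ht.1.trans ht.2)]
    exact hsub
  have hup := sub_le_integral_of_hasDeriv_right_of_le htt hΨ
    (fun s hs => (hΨ' s hs).hasDerivWithinAt) hEint fun s hs => (le_abs_self _).trans (hΨ'_le s hs)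
  have hlow := sub_le_integral_of_hasDeriv_right_of_le htt hΨ.neg
    (fun s hs => (hΨ' s hs).neg.hasDerivWithinAt) hEint
    fun s hs => (neg_le_abs _).trans (hΨ'_le s hs)
  have hmono : ∫ s in t..t', E s ≤ ∫ s in a..b, E s :=
    integral_mono_interval ht.1 htt ht'.2 ((ae_restrict_mem measurableSet_Ioc).mono fun s hs =>
      mul_nonneg (genergy_nonneg hε (hfc _ (hγU (Ioc_subset_Icc_self hs))))
        (Real.sqrt_nonneg _)) hint
  simp only [Ψ, Pi.neg_apply] at hup hlow
  rw [← abs_two, ← abs_mul, abs_le]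
  constructor <;> linarith

lemma le_integral_genergy_mul_euclNorm_of_forall_le (hε : 0 < ε) {m : ℝ} (hm : 0 ≤ m) (hab : a ≤ b)
    (hfm : ∀ t ∈ Icc a b, m ≤ f (c (γ t)))
    (hlen : ε ≤ ∫ t in a..b, euclNorm (deriv γ t))
    (hN : IntervalIntegrable (fun t => euclNorm (deriv γ t)) volume a b)
    (hint : IntervalIntegrable (fun t => genergy f e0 ε u c (γ t) * euclNorm (deriv γ t))
      volume a b) :
    m ≤ ∫ t in a..b, genergy f e0 ε u c (γ t) * euclNorm (deriv γ t) :=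
  calc m = m / ε * ε := by field_simp
    _ ≤ m / ε * ∫ t in a..b, euclNorm (deriv γ t) := by gcongr
    _ = ∫ t in a..b, m / ε * euclNorm (deriv γ t) := (intervalIntegral.integral_const_mul _ _).symm
    _ ≤ _ := integral_mono_on hab (hN.const_mul _) hint fun t ht => by
      refine mul_le_mul_of_nonneg_right ?_ (Real.sqrt_nonneg _)
      calc m / ε = 1 / ε * m := by ring
        _ ≤ 1 / ε * f (c (γ t)) := by gcongr; exact hfm t ht
        _ ≤ genergy f e0 ε u c (γ t) := one_div_mul_le_genergy hε

end Curves

theorem energy_lines_general (ω K T : ℝ) (μ0 : ℝ)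
    (hval : fbar ω K T μ0 = fbar ω K T (1 - μ0))
    (hmin : ∀ s ∈ Set.Icc (0 : ℝ) 1, s ≠ μ0 → s ≠ 1 - μ0 →
      fbar ω K T μ0 < fbar ω K T s) :
    ∀ δ > (0 : ℝ), ∃ h > (0 : ℝ),
      ∀ (d l ε : ℝ), 0 < d → 0 < l → 0 < ε →
      ∀ e0 : Matrix (Fin 2) (Fin 2) ℝ, e0ᵀ = e0 →
      ∀ (c : ℝ × ℝ → ℝ) (u : ℝ × ℝ → ℝ × ℝ) (γ : ℝ → ℝ × ℝ),
        ContDiffOn ℝ 1 c (Set.Ioo (-d) d ×ˢ Set.Ioo (-l) l) →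
        (∀ z ∈ Set.Ioo (-d) d ×ˢ Set.Ioo (-l) l, c z ∈ Set.Icc (0 : ℝ) 1) →
        ContDiffOn ℝ 1 u (Set.Ioo (-d) d ×ˢ Set.Ioo (-l) l) →
        ContDiffOn ℝ 1 γ (Set.Icc 0 1) →
        (∀ t ∈ Set.Icc (0 : ℝ) 1, γ t ∈ Set.Ioo (-d) d ×ˢ Set.Ioo (-l) l) →
        ε ≤ ∫ t in (0 : ℝ)..1, Real.sqrt ((deriv γ t).1 ^ 2 + (deriv γ t).2 ^ 2) →
        (∫ t in (0 : ℝ)..1,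
            genergy (fun s => fbar ω K T s - fbar ω K T μ0) e0 ε u c (γ t) *
              Real.sqrt ((deriv γ t).1 ^ 2 + (deriv γ t).2 ^ 2)) ≤ h →
        (∀ t ∈ Set.Icc (0 : ℝ) 1, |c (γ t) - μ0| ≤ δ) ∨
        (∀ t ∈ Set.Icc (0 : ℝ) 1, |c (γ t) - (1 - μ0)| ≤ δ) := by
  intro δ hδ
  set f := fun s => fbar ω K T s - fbar ω K T μ0
  have hf : Continuous f := (continuous_fbar ω K T).sub continuous_const
  have hf_pos : ∀ s ∈ Icc (0 : ℝ) 1 \ {μ0, 1 - μ0}, 0 < f s := fun s ⟨hs, hs'⟩ => by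
    simp only [mem_insert_iff, mem_singleton_iff, not_or] at hs'
    simpa [f] using hmin s hs hs'.1 hs'.2
  have hf_nonneg : ∀ s ∈ Icc (0 : ℝ) 1, 0 ≤ f s := fun s hs => by
    by_cases hs' : s ∈ ({μ0, 1 - μ0} : Set ℝ)
    · rcases hs' with rfl | rfl <;> simp [f, hval]
    · exact (hf_pos s ⟨hs, hs'⟩).le
  obtain ⟨m, hm, hwell⟩ :=
    isCompact_Icc.exists_pos_exists_dist_lt_of_lt hf.continuousOn hf_pos (half_pos hδ)
  obtain ⟨κ, hκ, hgap⟩ := isCompact_Icc.exists_pos_dist_lt_of_dist_apply_lt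
    (continuous_sqrtPrimitive hf).continuousOn
    (sqrtPrimitive_strictMonoOn hf (toFinite _) hf_pos).injOn (half_pos hδ)
  refine ⟨min m (2 * κ) / 2, by positivity, ?_⟩
  intro d l ε _ _ hε e0 _ c u γ hc hcI hu hγ hγU hlen henergy
  change ε ≤ ∫ t in (0 : ℝ)..1, euclNorm (deriv γ t) at hlen
  change ∫ t in (0 : ℝ)..1, genergy f e0 ε u c (γ t) * euclNorm (deriv γ t) ≤ _ at henergy
  have hU : IsOpen (Ioo (-d) d ×ˢ Ioo (-l) l) := isOpen_Ioo.prod isOpen_Ioo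
  have hint := intervalIntegrable_comp_mul_euclNorm_deriv zero_lt_one
    (continuousOn_genergy (e0 := e0) (ε := ε) hf hU hc hu) hγ hγU
  have hcγ : ∀ t ∈ Icc (0 : ℝ) 1, c (γ t) ∈ Icc (0 : ℝ) 1 := fun t ht => hcI _ (hγU t ht)
  obtain ⟨t₀, ht₀, hft₀⟩ : ∃ t₀ ∈ Icc (0 : ℝ) 1, f (c (γ t₀)) < m := by
    by_contra! hfar
    have hN := intervalIntegrable_comp_mul_euclNorm_deriv zero_lt_one
      (continuousOn_const (c := (1 : ℝ))) hγ hγU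
    simp only [one_mul] at hN
    have := le_integral_genergy_mul_euclNorm_of_forall_le hε hm.le zero_le_one hfar hlen hN hint
    linarith [min_le_left m (2 * κ)]
  have hclose : ∀ t ∈ Icc (0 : ℝ) 1, |c (γ t) - c (γ t₀)| < δ / 2 := fun t ht =>
    hgap _ (hcγ t ht) _ (hcγ t₀ ht₀) <| by
      have := two_mul_abs_sqrtPrimitive_sub_le_integral hf hε hU hc
        (fun z hz => hf_nonneg _ (hcI z hz)) hγ hγU hint ht₀ ht
      rw [Real.dist_eq]
      linarith [min_le_right m (2 * κ)]
  obtain ⟨μ, hμ, hnear⟩ := hwell _ (hcγ t₀ ht₀) hft₀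
  have hδμ : ∀ t ∈ Icc (0 : ℝ) 1, |c (γ t) - μ| ≤ δ := fun t ht => by
    have := abs_sub_le (c (γ t)) (c (γ t₀)) μ
    rw [Real.dist_eq] at hnear
    linarith [hclose t ht]
  rcases hμ with rfl | rfl
  exacts [Or.inl hδμ, Or.inr hδμ]

/-- Energy along curves lemma: for every `δ > 0` there is `h > 0` (depending only on
`δ, ω, K, T`) such that any `C¹` curve of length at least `ε` in the rectangle along which
the energy density `g_ε` integrates to at most `h` stays δ-close to one single well of
`f = f̄ - f̄(μ0)`. -/
theorem energy_lines (ω K T : ℝ) (hK : 0 < K) (hT : 0 < T) (hω : 2 * K * T < ω)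
    (μ0 : ℝ) (hμ0 : μ0 ∈ Set.Ioo (0 : ℝ) (1 / 2))
    (hval : fbar ω K T μ0 = fbar ω K T (1 - μ0))
    (hmin : ∀ s ∈ Set.Icc (0 : ℝ) 1, s ≠ μ0 → s ≠ 1 - μ0 →
      fbar ω K T μ0 < fbar ω K T s) :
    ∀ δ > (0 : ℝ), ∃ h > (0 : ℝ),
      ∀ (d l ε : ℝ), 0 < d → 0 < l → 0 < ε →
      ∀ e0 : Matrix (Fin 2) (Fin 2) ℝ, e0ᵀ = e0 →
      ∀ (c : ℝ × ℝ → ℝ) (u : ℝ × ℝ → ℝ × ℝ) (γ : ℝ → ℝ × ℝ),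
        ContDiffOn ℝ 1 c (Set.Ioo (-d) d ×ˢ Set.Ioo (-l) l) →
        (∀ z ∈ Set.Ioo (-d) d ×ˢ Set.Ioo (-l) l, c z ∈ Set.Icc (0 : ℝ) 1) →
        ContDiffOn ℝ 1 u (Set.Ioo (-d) d ×ˢ Set.Ioo (-l) l) →
        ContDiffOn ℝ 1 γ (Set.Icc 0 1) →
        (∀ t ∈ Set.Icc (0 : ℝ) 1, γ t ∈ Set.Ioo (-d) d ×ˢ Set.Ioo (-l) l) →
        ε ≤ ∫ t in (0 : ℝ)..1, Real.sqrt ((deriv γ t).1 ^ 2 + (deriv γ t).2 ^ 2) →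
        (∫ t in (0 : ℝ)..1,
            genergy (fun s => fbar ω K T s - fbar ω K T μ0) e0 ε u c (γ t) *
              Real.sqrt ((deriv γ t).1 ^ 2 + (deriv γ t).2 ^ 2)) ≤ h →
        (∀ t ∈ Set.Icc (0 : ℝ) 1, |c (γ t) - μ0| ≤ δ) ∨
        (∀ t ∈ Set.Icc (0 : ℝ) 1, |c (γ t) - (1 - μ0)| ≤ δ) :=
  energy_lines_general ω K T μ0 hval hmin
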